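/- arXiv:2207.05305 — 3 statements merged into one kernel-verified Lean document; each statement's English description precedes it below -/
import Mathlib

section
/- Let G=(V,E) be a connected undirected graph with positive edge lengths d_e, let s ∈ V, and let V_R ⊆ V be a set of required vertices. Let G̃=(V,Ẽ) be the directed graph obtained from G by replacing every edge [u,v] with the two opposite arcs (u,v) and (v,u), each inheriting the length of [u,v]. Then every closed directed walk in G̃ that starts and ends at s, visits every vertex of V_R, and has minimum total length among all such walks traverses each arc of Ẽ at most once. -/
/-- `w` is a closed directed walk from `s` in the digraph obtained from the
undirected graph `G` by replacing every edge `[u,v]` with the two opposite arcs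
`(u,v)` and `(v,u)`: it is a nonempty finite sequence of arcs of `G̃` in which
the head of each arc is the tail of the next one, and the tail of the first
arc and the head of the last arc are both `s`. -/
def IsClosedWalkFrom {V : Type*} (G : SimpleGraph V) (s : V) (w : List (V × V)) : Prop :=
  w.head?.map Prod.fst = some s ∧
  w.getLast?.map Prod.snd = some s ∧
  w.Chain' (fun a b => a.2 = b.1) ∧
  ∀ a ∈ w, G.Adj a.1 a.2

/-- The walk `w` visits the vertex `v`: `v` is the tail or the head of one of
its arcs. -/
def WalkVisits {V : Type*} (w : List (V × V)) (v : V) : Prop :=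
  ∃ a ∈ w, v = a.1 ∨ v = a.2

/-- The total length of the walk `w`: the sum of the lengths of its arcs,
counted with multiplicity. -/
noncomputable def walkLength {V : Type*} (d : V → V → ℝ) (w : List (V × V)) : ℝ :=
  (w.map fun a => d a.1 a.2).sum

/-!
If an optimal walk used the arc `a = (x, y)` twice, it would read `A, a, B, a, C` where `B` is a
walk from `y` back to `x`; `B` is nonempty since `G` has no loops, so it visits `x` and `y`.
Replacing `a, B, a` by `B` traversed backwards (every arc of `G̃` has an opposite arc of the same
length) yields a closed walk from `s` visiting every vertex the old one did, and it is shorter by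
`2 d(x, y) > 0`.
-/

theorem List.exists_eq_append_cons_append_cons_of_two_le_count {α : Type*} [BEq α] [LawfulBEq α]
    {a : α} {l : List α} (h : 2 ≤ l.count a) : ∃ A B C, l = A ++ a :: (B ++ a :: C) := by
  have hsub : List.Sublist [a, a] l := List.replicate_sublist_iff.mpr h
  obtain ⟨r₁, r₂, rfl, h₁, h₂⟩ := List.cons_sublist_iff.mp hsub
  obtain ⟨A, B, rfl⟩ := List.append_of_mem h₁
  obtain ⟨B', C, rfl⟩ := List.append_of_mem (List.singleton_sublist.mp h₂)
  exact ⟨A, B ++ B', C, by simp⟩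

section ArcWalk

variable {V : Type*}

inductive IsArcWalk : V → V → List (V × V) → Prop
  | nil (u : V) : IsArcWalk u u []
  | cons {u v w : V} {l : List (V × V)} : IsArcWalk v w l → IsArcWalk u w ((u, v) :: l)

def reverseWalk (l : List (V × V)) : List (V × V) := (l.map Prod.swap).reverse

@[simp]
theorem reverseWalk_cons (a : V × V) (l : List (V × V)) :
    reverseWalk (a :: l) = reverseWalk l ++ [a.swap] := by
  simp [reverseWalk]

theorem mem_reverseWalk {a : V × V} {l : List (V × V)} : a ∈ reverseWalk l ↔ a.swap ∈ l := by
  rw [reverseWalk, List.mem_reverse, List.mem_map_of_involutive Prod.swap_swap]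

@[simp]
theorem reverseWalk_eq_nil {l : List (V × V)} : reverseWalk l = [] ↔ l = [] := by
  simp [reverseWalk]

@[simp]
theorem isArcWalk_nil_iff {u v : V} : IsArcWalk u v [] ↔ u = v :=
  ⟨fun | .nil _ => rfl, fun h => h ▸ .nil u⟩

theorem isArcWalk_cons_iff {u w : V} {a : V × V} {l : List (V × V)} :
    IsArcWalk u w (a :: l) ↔ a.1 = u ∧ IsArcWalk a.2 w l := by
  obtain ⟨x, y⟩ := a
  constructor
  · rintro (_ | h)
    exact ⟨rfl, h⟩
  · rintro ⟨rfl, h⟩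
    exact .cons h

theorem IsArcWalk.append {u v w : V} {l₁ l₂ : List (V × V)} (h₁ : IsArcWalk u v l₁)
    (h₂ : IsArcWalk v w l₂) : IsArcWalk u w (l₁ ++ l₂) := by
  induction h₁ with
  | nil => exact h₂
  | cons _ ih => exact cons (ih h₂)

theorem isArcWalk_append_iff {u w : V} {l₁ l₂ : List (V × V)} :
    IsArcWalk u w (l₁ ++ l₂) ↔ ∃ v, IsArcWalk u v l₁ ∧ IsArcWalk v w l₂ := by
  refine ⟨fun h => ?_, fun ⟨_, h₁, h₂⟩ => h₁.append h₂⟩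
  induction l₁ generalizing u with
  | nil => exact ⟨u, .nil u, h⟩
  | cons a l ih =>
    obtain ⟨rfl, htail⟩ := isArcWalk_cons_iff.mp h
    obtain ⟨v, h₁, h₂⟩ := ih htail
    exact ⟨v, isArcWalk_cons_iff.mpr ⟨rfl, h₁⟩, h₂⟩

theorem IsArcWalk.reverse {u v : V} {l : List (V × V)} (h : IsArcWalk u v l) :
    IsArcWalk v u (reverseWalk l) := by
  induction h with
  | nil u => exact nil u
  | cons _ ih => simpa using ih.append (cons (nil _))

theorem isArcWalk_iff_isChain {u v : V} {l : List (V × V)} (hl : l ≠ []) :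
    IsArcWalk u v l ↔ l.head?.map Prod.fst = some u ∧ l.getLast?.map Prod.snd = some v ∧
      List.IsChain (fun a b : V × V => a.2 = b.1) l := by
  induction l generalizing u with
  | nil => exact absurd rfl hl
  | cons a l ih =>
    rcases l with _ | ⟨b, l⟩
    · simp [isArcWalk_cons_iff]
    · simp [isArcWalk_cons_iff, ih, List.isChain_cons_cons, eq_comm, and_left_comm]

theorem IsArcWalk.of_append_cons_append_cons {u v : V} {a : V × V} {A B C : List (V × V)}
    (h : IsArcWalk u v (A ++ a :: (B ++ a :: C))) :
    IsArcWalk u a.1 A ∧ IsArcWalk a.2 a.1 B ∧ IsArcWalk a.2 v C := by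
  obtain ⟨x, hA, haBaC⟩ := isArcWalk_append_iff.mp h
  obtain ⟨rfl, hBaC⟩ := isArcWalk_cons_iff.mp haBaC
  obtain ⟨y, hB, haC⟩ := isArcWalk_append_iff.mp hBaC
  obtain ⟨rfl, hC⟩ := isArcWalk_cons_iff.mp haC
  exact ⟨hA, hB, hC⟩

theorem isClosedWalkFrom_iff {G : SimpleGraph V} {s : V} {w : List (V × V)} :
    IsClosedWalkFrom G s w ↔ w ≠ [] ∧ IsArcWalk s s w ∧ ∀ a ∈ w, G.Adj a.1 a.2 := by
  rcases eq_or_ne w [] with rfl | hw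
  · simp [IsClosedWalkFrom]
  · rw [isArcWalk_iff_isChain hw]
    simp only [IsClosedWalkFrom, ne_eq, hw, not_false_eq_true, true_and, and_assoc]
    rfl

section Visits

variable {l l₁ l₂ : List (V × V)} {v : V}

theorem walkVisits_append : WalkVisits (l₁ ++ l₂) v ↔ WalkVisits l₁ v ∨ WalkVisits l₂ v := by
  simp [WalkVisits, or_and_right, exists_or]

theorem walkVisits_cons {a : V × V} :
    WalkVisits (a :: l) v ↔ v = a.1 ∨ v = a.2 ∨ WalkVisits l v := by
  simp [WalkVisits, or_assoc]

theorem walkVisits_reverseWalk : WalkVisits (reverseWalk l) v ↔ WalkVisits l v := by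
  constructor
  · rintro ⟨a, ha, hv⟩
    exact ⟨a.swap, mem_reverseWalk.mp ha, hv.symm⟩
  · rintro ⟨a, ha, hv⟩
    exact ⟨a.swap, mem_reverseWalk.mpr ha, hv.symm⟩

theorem IsArcWalk.walkVisits_start {u : V} (h : IsArcWalk u v l) (hl : l ≠ []) :
    WalkVisits l u := by
  cases h with
  | nil => exact absurd rfl hl
  | cons => exact ⟨_, List.mem_cons_self, Or.inl rfl⟩

theorem IsArcWalk.walkVisits_end {u : V} (h : IsArcWalk u v l) (hl : l ≠ []) :
    WalkVisits l v :=
  walkVisits_reverseWalk.mp (h.reverse.walkVisits_start (by simpa using hl))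

end Visits

section Length

variable (d : V → V → ℝ) {l l₁ l₂ : List (V × V)}

theorem walkLength_append : walkLength d (l₁ ++ l₂) = walkLength d l₁ + walkLength d l₂ := by
  simp [walkLength]

theorem walkLength_cons (a : V × V) : walkLength d (a :: l) = d a.1 a.2 + walkLength d l := by
  simp [walkLength]

theorem walkLength_reverseWalk (hd : ∀ u v, d u v = d v u) :
    walkLength d (reverseWalk l) = walkLength d l := by
  simp [walkLength, reverseWalk, Function.comp_def, hd]

theorem walkLength_append_cons_append_cons (hd : ∀ u v, d u v = d v u) (a : V × V)
    (A B C : List (V × V)) :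
    walkLength d (A ++ a :: (B ++ a :: C)) =
      walkLength d (A ++ (reverseWalk B ++ C)) + 2 * d a.1 a.2 := by
  simp only [walkLength_append, walkLength_cons, walkLength_reverseWalk d hd]
  ring

end Length

theorem IsClosedWalkFrom.shortcut {G : SimpleGraph V} {s : V} {a : V × V}
    {A B C : List (V × V)} (hw : IsClosedWalkFrom G s (A ++ a :: (B ++ a :: C))) :
    IsClosedWalkFrom G s (A ++ (reverseWalk B ++ C)) ∧
      ∀ v, WalkVisits (A ++ a :: (B ++ a :: C)) v → WalkVisits (A ++ (reverseWalk B ++ C)) v := by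
  obtain ⟨-, hwalk, hadj⟩ := isClosedWalkFrom_iff.mp hw
  obtain ⟨hA, hB, hC⟩ := hwalk.of_append_cons_append_cons
  have hBne : B ≠ [] := by
    rintro rfl
    exact (hadj a (by simp)).ne (isArcWalk_nil_iff.mp hB).symm
  refine ⟨isClosedWalkFrom_iff.mpr ⟨by simp [hBne], hA.append (hB.reverse.append hC), ?_⟩,
    fun v hv => ?_⟩
  · intro b hb
    simp only [List.mem_append, mem_reverseWalk] at hb
    rcases hb with hb | hb | hb
    · exact hadj b (by simp [hb])
    · exact (hadj b.swap (by simp [hb])).symm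
    · exact hadj b (by simp [hb])
  · have ha₁ := hB.walkVisits_end hBne
    have ha₂ := hB.walkVisits_start hBne
    simp only [walkVisits_append, walkVisits_cons, walkVisits_reverseWalk] at hv ⊢
    rcases hv with h | rfl | rfl | h | rfl | rfl | h <;> tauto

end ArcWalk

theorem optimal_walk_traverses_each_arc_at_most_once_general
    {V : Type*} [DecidableEq V] (G : SimpleGraph V)
    (d : V → V → ℝ)
    (hd_symm : ∀ u v, d u v = d v u)
    (hd_pos : ∀ u v, G.Adj u v → 0 < d u v)
    (s : V) (VR : Set V) (w : List (V × V))
    (hw : IsClosedWalkFrom G s w)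
    (hvis : ∀ v ∈ VR, WalkVisits w v)
    (hmin : ∀ w', IsClosedWalkFrom G s w' → (∀ v ∈ VR, WalkVisits w' v) →
      walkLength d w ≤ walkLength d w') :
    ∀ a : V × V, w.count a ≤ 1 := by
  intro a
  by_contra! hcount
  obtain ⟨A, B, C, rfl⟩ := List.exists_eq_append_cons_append_cons_of_two_le_count hcount
  obtain ⟨hw', hvis'⟩ := hw.shortcut
  have hshorter := hmin _ hw' fun v hv => hvis' v (hvis v hv)
  have hpos := hd_pos a.1 a.2 (hw.2.2.2 a (by simp))
  linarith [walkLength_append_cons_append_cons d hd_symm a A B C]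

/-- If `G` is a connected undirected graph with positive edge lengths (each of
the two opposite arcs inheriting the length of the corresponding edge), then
every closed directed walk starting and ending at `s` that visits every vertex
of the required set `VR` and has minimum total length among all such walks
traverses each arc at most once. -/
theorem optimal_walk_traverses_each_arc_at_most_once
    {V : Type*} [DecidableEq V] (G : SimpleGraph V) (hG : G.Connected)
    (d : V → V → ℝ)
    (hd_symm : ∀ u v, d u v = d v u)
    (hd_pos : ∀ u v, G.Adj u v → 0 < d u v)
    (s : V) (VR : Set V) (w : List (V × V))
    (hw : IsClosedWalkFrom G s w)
    (hvis : ∀ v ∈ VR, WalkVisits w v)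
    (hmin : ∀ w', IsClosedWalkFrom G s w' → (∀ v ∈ VR, WalkVisits w' v) →
      walkLength d w ≤ walkLength d w') :
    ∀ a : V × V, w.count a ≤ 1 :=
  optimal_walk_traverses_each_arc_at_most_once_general G d hd_symm hd_pos s VR w hw hvis hmin
end

section
/- In a single-block warehouse graph, if a tour r contains as a contiguous segment the subpath u_i v_{i1} v_{i2} … v_{i s_i} d_i v_{i s_i} v_{i(s_i−1)} … v_{i1} u_i for some aisle i (i.e., it goes down the full aisle and immediately back up), then there exists a tour r' that is better than r. -/
namespace SingleBlock

/-- Vertices of a single-block warehouse with `n` aisles, where aisle `i`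
contains `sz i + 1` picking vertices: `Sum.inl (Sum.inl i)` is the artificial
vertex `u i` on the top cross-aisle, `Sum.inl (Sum.inr i)` is the artificial
vertex `d i` on the bottom cross-aisle, and `Sum.inr ⟨i, k⟩` is the picking
vertex `v i k` (numbered from north to south). -/
abbrev SBV (n : ℕ) (sz : Fin n → ℕ) : Type :=
  (Fin n ⊕ Fin n) ⊕ ((i : Fin n) × Fin (sz i + 1))

variable {n : ℕ} {sz : Fin n → ℕ}

/-- the artificial vertex `u i` on the top cross-aisle -/
def top (i : Fin n) : SBV n sz := Sum.inl (Sum.inl i)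

/-- the artificial vertex `d i` on the bottom cross-aisle -/
def bot (i : Fin n) : SBV n sz := Sum.inl (Sum.inr i)

/-- the picking vertex `v i k` -/
def pk (i : Fin n) (k : Fin (sz i + 1)) : SBV n sz := Sum.inr ⟨i, k⟩

/-- `v` is a picking vertex -/
def IsPick (v : SBV n sz) : Prop := ∃ i k, v = pk i k

/-- the aisle path `u_i — v_{i1} — ⋯ — v_{i s_i} — d_i` of aisle `i`,
as a list of vertices from north to south -/
def aislePath (i : Fin n) : List (SBV n sz) :=
  top i :: ((List.ofFn fun k : Fin (sz i + 1) => pk i k) ++ [bot i])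

/-- `x` and `y` occur consecutively (in this order) in the list `l` -/
def adjIn {α : Type*} (l : List α) (x y : α) : Prop :=
  ∃ p : ℕ, l[p]? = some x ∧ l[p + 1]? = some y

/-- adjacency in the single-block warehouse graph: neighboring artificial
vertices along the two cross-aisles, and consecutive vertices along each aisle
path -/
def Adj (x y : SBV n sz) : Prop :=
  (∃ i j : Fin n, (j : ℕ) = (i : ℕ) + 1 ∧
    ((x = top i ∧ y = top j) ∨ (x = top j ∧ y = top i) ∨
     (x = bot i ∧ y = bot j) ∨ (x = bot j ∧ y = bot i))) ∨
  (∃ i, adjIn (aislePath i) x y ∨ adjIn (aislePath i) y x)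

/-- the length of a walk, written as a list of vertices: the sum of the lengths
of its edges, counted with multiplicity -/
noncomputable def pathLen {α : Type*} (len : α → α → ℝ) (r : List α) : ℝ :=
  ((r.zip r.tail).map fun p => len p.1 p.2).sum

/-- a tour: a closed walk starting and ending at `s` -/
def IsTourFrom (s : SBV n sz) (r : List (SBV n sz)) : Prop :=
  r.head? = some s ∧ r.getLast? = some s ∧ r.Chain' Adj

/-- the tour `r'` is better than the tour `r`: every picking vertex visited by
`r` is also visited by `r'`, and `r'` is strictly shorter than `r` -/
def Better (len : SBV n sz → SBV n sz → ℝ) (r' r : List (SBV n sz)) : Prop :=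
  (∀ v, IsPick v → v ∈ r → v ∈ r') ∧ pathLen len r' < pathLen len r

/-- number of contiguous occurrences of `seg` in `r` -/
def occCount {α : Type*} [DecidableEq α] (seg r : List α) : ℕ :=
  ((List.range r.length).filter fun p => seg.isPrefixOf (r.drop p)).length

/-! Going down aisle `i` and straight back up passes through `v_{i s_i} d_i v_{i s_i}`.
Since `d_i` is not a picking vertex, cutting out this detour leaves a closed walk from `s`
that visits the same picking vertices and is shorter by the two positive lengths of the
edge `[v_{i s_i}, d_i]`. -/

section PathLen

variable {α : Type*} (len : α → α → ℝ)

lemma pathLen_cons_cons (x y : α) (l : List α) :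
    pathLen len (x :: y :: l) = len x y + pathLen len (y :: l) := by
  simp [pathLen, List.zip_cons_cons]

lemma pathLen_cons (x : α) (l : List α) :
    pathLen len (x :: l) = (l.head?.map (len x)).getD 0 + pathLen len l := by
  cases l <;> simp [pathLen]

lemma pathLen_append_detour (C E : List α) (x y : α) :
    pathLen len (C ++ x :: y :: x :: E) =
      pathLen len (C ++ x :: E) + (len x y + len y x) := by
  induction C with
  | nil => simp only [List.nil_append, pathLen_cons_cons]; ring
  | cons c C ih =>
    simp only [List.cons_append, pathLen_cons, ih, List.head?_append, List.head?_cons]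
    ring

end PathLen

theorem _root_.List.IsChain.of_append_detour {α : Type*} {R : α → α → Prop} {C E : List α}
    {x y : α} (h : (C ++ x :: y :: x :: E).IsChain R) :
    R x y ∧ R y x ∧ (C ++ x :: E).IsChain R := by
  rw [List.isChain_append, List.isChain_cons_cons, List.isChain_cons_cons] at h
  obtain ⟨hC, ⟨hxy, hyx, hE⟩, hjoin⟩ := h
  exact ⟨hxy, hyx, List.isChain_append.2 ⟨hC, hE, hjoin⟩⟩

lemma IsTourFrom.remove_detour {s : SBV n sz} {C E : List (SBV n sz)} {x y : SBV n sz}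
    (hr : IsTourFrom s (C ++ x :: y :: x :: E)) : IsTourFrom s (C ++ x :: E) := by
  obtain ⟨hhead, hlast, hchain⟩ := hr
  refine ⟨by simpa [List.head?_append] using hhead, ?_,
    (List.IsChain.of_append_detour hchain).2.2⟩
  simpa [List.getLast?_append, List.getLast?_cons_cons] using hlast

lemma better_remove_detour (len : SBV n sz → SBV n sz → ℝ)
    (hpos : ∀ x y, Adj x y → 0 < len x y)
    {C E : List (SBV n sz)} {x y : SBV n sz}
    (hr : (C ++ x :: y :: x :: E).IsChain Adj) (hy : ¬ IsPick y) :
    Better len (C ++ x :: E) (C ++ x :: y :: x :: E) := by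
  obtain ⟨hxy, hyx, -⟩ := hr.of_append_detour
  refine ⟨fun v hv hmem => ?_, ?_⟩
  · have hvy : v ≠ y := by rintro rfl; exact hy hv
    simp only [List.mem_append, List.mem_cons] at hmem ⊢
    tauto
  · rw [pathLen_append_detour]
    linarith [hpos _ _ hxy, hpos _ _ hyx]

lemma not_isPick_bot (i : Fin n) : ¬ IsPick (bot i : SBV n sz) := by
  rintro ⟨j, k, h⟩
  simp [pk, bot] at h

lemma aislePath_append_reverse_tail (i : Fin n) :
    ∃ A B : List (SBV n sz), aislePath i ++ (aislePath i).reverse.tail =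
      A ++ pk i (Fin.last _) :: bot i :: pk i (Fin.last _) :: B := by
  refine ⟨top i :: List.ofFn (fun k : Fin (sz i) => pk i k.castSucc),
    (List.ofFn (fun k : Fin (sz i) => pk i k.castSucc)).reverse ++ [top i], ?_⟩
  rw [aislePath, List.ofFn_succ']
  simp [List.reverse_append]

theorem down_and_back_up_not_optimal_general
    {n : ℕ} {sz : Fin (n + 1) → ℕ}
    (len : SBV (n + 1) sz → SBV (n + 1) sz → ℝ)
    (hpos : ∀ x y, Adj x y → 0 < len x y)
    (r : List (SBV (n + 1) sz)) (hr : IsTourFrom (top 0) r)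
    (i : Fin (n + 1))
    (hseg : (aislePath i ++ (aislePath i).reverse.tail) <:+: r) :
    ∃ r', IsTourFrom (top 0) r' ∧ Better len r' r := by
  obtain ⟨pre, suf, rfl⟩ := hseg
  obtain ⟨A, B, hAB⟩ := aislePath_append_reverse_tail i
  rw [hAB] at hr ⊢
  simp only [List.append_assoc, List.cons_append] at hr ⊢
  rw [← List.append_assoc] at hr ⊢
  exact ⟨_, hr.remove_detour, better_remove_detour len hpos hr.2.2 (not_isPick_bot i)⟩

/-- Lemma 1: in a single-block warehouse graph (with symmetric positive edge
lengths, corresponding top and bottom cross-aisle edges of equal length, and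
all aisle paths of equal total length), if a tour `r` contains as a contiguous
segment the subpath `u_i v_{i1} v_{i2} … v_{i s_i} d_i v_{i s_i} … v_{i1} u_i`
for some aisle `i` (going down the full aisle and immediately back up), then
there exists a tour `r'` that is better than `r`. -/
theorem down_and_back_up_not_optimal
    {n : ℕ} {sz : Fin (n + 1) → ℕ}
    (len : SBV (n + 1) sz → SBV (n + 1) sz → ℝ)
    (hsymm : ∀ x y, len x y = len y x)
    (hpos : ∀ x y, Adj x y → 0 < len x y)
    (hcross : ∀ i j : Fin (n + 1), (j : ℕ) = (i : ℕ) + 1 →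
      len (top i) (top j) = len (bot i) (bot j))
    (haisle : ∀ i i' : Fin (n + 1),
      pathLen len (aislePath i) = pathLen len (aislePath i'))
    (r : List (SBV (n + 1) sz)) (hr : IsTourFrom (top 0) r)
    (i : Fin (n + 1))
    (hseg : (aislePath i ++ (aislePath i).reverse.tail) <:+: r) :
    ∃ r', IsTourFrom (top 0) r' ∧ Better len r' r :=
  down_and_back_up_not_optimal_general len hpos r hr i hseg

end SingleBlock
end

section
/- In a two-block warehouse graph under no-reversal routing, assume subaisle 1 ∈ K1, |K1| is odd and |K2| is even (with K2 nonempty). Then no no-reversal tour traverses every subaisle of K1 ∪ K2 at least once with total vertical distance equal to |K1 ∪ K2| · d; equivalently, every such tour has l_r ≥ (|K1 ∪ K2| + 1) · d. -/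
/-!
Cut the tour into its full subaisle traversals. A vertical edge has a picking vertex as an
endpoint, and the no-reversal condition places every visit of a picking vertex inside a
traversal; and no traversal starts strictly inside another one, since traversals start at
artificial vertices while their inner vertices are picking vertices. So the vertical distance
is `d` times the number of traversals. Only traversals of top-block subaisles move the tour
onto or off the top cross-aisle, so, the tour being closed, there is an even number of them.
Every required subaisle is traversed, giving at least `|K1|` top and `|K2|` bottom traversals,
and the parity of `|K1|` forces one more top traversal.
-/

namespace TwoBlock

/-- Vertices of a two-block warehouse with `n` vertical aisles and three
horizontal cross-aisles (`0` = top, `1` = middle, `2` = bottom).  Each aisle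
`i` is split by the middle cross-aisle into a top subaisle `(i,0)` and a
bottom subaisle `(i,1)`; subaisle `(i,j)` contains `m i j + 1` picking
vertices.  `Sum.inl (i, j)` is the artificial vertex at aisle `i` on
cross-aisle `j`; `Sum.inr ⟨i, j, k⟩` is the `k`-th picking vertex (from north
to south) of subaisle `(i,j)`. -/
abbrev TBV (n : ℕ) (m : Fin n → Fin 2 → ℕ) : Type :=
  (Fin n × Fin 3) ⊕ ((i : Fin n) × (j : Fin 2) × Fin (m i j + 1))

variable {n : ℕ} {m : Fin n → Fin 2 → ℕ}

/-- the artificial vertex at aisle `i` on cross-aisle `j` -/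
def art (i : Fin n) (j : Fin 3) : TBV n m := Sum.inl (i, j)

/-- the `k`-th picking vertex of subaisle `(i,j)` -/
def pk (i : Fin n) (j : Fin 2) (k : Fin (m i j + 1)) : TBV n m := Sum.inr ⟨i, j, k⟩

/-- `v` is a picking vertex -/
def IsPick (v : TBV n m) : Prop := ∃ i j k, v = pk i j k

/-- the full path through subaisle `(i,j)` from its northern endpoint to its
southern endpoint -/
def subPath (i : Fin n) (j : Fin 2) : List (TBV n m) :=
  art i j.castSucc :: ((List.ofFn fun k : Fin (m i j + 1) => pk i j k) ++ [art i j.succ])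

/-- `x` and `y` occur consecutively (in this order) in the list `l` -/
def adjIn {α : Type*} (l : List α) (x y : α) : Prop :=
  ∃ p : ℕ, l[p]? = some x ∧ l[p + 1]? = some y

/-- adjacency in the two-block warehouse graph: neighboring artificial
vertices along each of the three cross-aisles, and consecutive vertices along
each subaisle path -/
def Adj (x y : TBV n m) : Prop :=
  (∃ (i i' : Fin n) (j : Fin 3), (i' : ℕ) = (i : ℕ) + 1 ∧
    ((x = art i j ∧ y = art i' j) ∨ (x = art i' j ∧ y = art i j))) ∨
  (∃ i j, adjIn (subPath i j) x y ∨ adjIn (subPath i j) y x)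

/-- the length of a walk, written as a list of vertices: the sum of the
lengths of its edges, counted with multiplicity -/
noncomputable def pathLen {α : Type*} (len : α → α → ℝ) (r : List α) : ℝ :=
  ((r.zip r.tail).map fun p => len p.1 p.2).sum

/-- a tour: a closed walk starting and ending at `s` -/
def IsTourFrom (s : TBV n m) (r : List (TBV n m)) : Prop :=
  r.head? = some s ∧ r.getLast? = some s ∧ r.Chain' Adj

/-- the full path through subaisle `(i,j)` in the direction `dir`
(`true` = from north to south, `false` = from south to north) -/
def dirPath (i : Fin n) (j : Fin 2) (dir : Bool) : List (TBV n m) :=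
  if dir then subPath i j else (subPath i j).reverse

/-- the tour `r` performs a full traversal of subaisle `(i,j)` in direction
`dir` starting at position `q` -/
def TravAt (r : List (TBV n m)) (q : ℕ) (i : Fin n) (j : Fin 2) (dir : Bool) : Prop :=
  dirPath i j dir <+: r.drop q

/-- `r` is a no-reversal tour: whenever it enters a subaisle it traverses it
completely from one endpoint to the other, i.e. every occurrence of a picking
vertex lies inside a contiguous full traversal of its subaisle -/
def NoReversal (r : List (TBV n m)) : Prop :=
  ∀ (p : ℕ) (i : Fin n) (j : Fin 2) (k : Fin (m i j + 1)),
    r[p]? = some (pk i j k) →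
      ∃ q dir, TravAt r q i j dir ∧ q ≤ p ∧ p < q + (subPath (m := m) i j).length

/-- the tour `r` traverses subaisle `(i,j)` (at least once) -/
def Traverses (r : List (TBV n m)) (i : Fin n) (j : Fin 2) : Prop :=
  ∃ q dir, TravAt r q i j dir

/-- `K1` (resp. `K2`) is the set of aisles whose top (resp. bottom) subaisle
contains a required picking vertex; `r` traverses every required subaisle at
least once -/
def TraversesAll (K1 K2 : Finset (Fin n)) (r : List (TBV n m)) : Prop :=
  (∀ a ∈ K1, Traverses r a 0) ∧ (∀ a ∈ K2, Traverses r a 1)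

/-- `v` is a picking vertex (Boolean version) -/
def isPickV : TBV n m → Bool := fun v =>
  match v with
  | Sum.inr _ => true
  | Sum.inl _ => false

/-- the total vertical distance of a tour: the sum of the lengths of all
subaisle (vertical) edges it traverses, counted with multiplicity -/
noncomputable def vertLen (len : TBV n m → TBV n m → ℝ) (r : List (TBV n m)) : ℝ :=
  ((r.zip r.tail).map fun p =>
    if isPickV p.1 || isPickV p.2 then len p.1 p.2 else 0).sum

/-- number of contiguous occurrences of `seg` in `r` -/
def occCount {α : Type*} [DecidableEq α] (seg r : List α) : ℕ :=
  ((List.range r.length).filter fun p => seg.isPrefixOf (r.drop p)).length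

end TwoBlock

theorem Finset.sum_range_eq_sum_sum_of_pairwiseDisjoint {ι M : Type*} [AddCommMonoid M]
    {N : ℕ} {f : ℕ → M} {T : Finset ι} {start width : ι → ℕ}
    (hdisj : (T : Set ι).PairwiseDisjoint fun x => Finset.Ico (start x) (start x + width x))
    (hle : ∀ x ∈ T, start x + width x ≤ N)
    (hzero : ∀ p < N, (∀ x ∈ T, p ∉ Finset.Ico (start x) (start x + width x)) → f p = 0) :
    ∑ p ∈ Finset.range N, f p = ∑ x ∈ T, ∑ t ∈ Finset.range (width x), f (start x + t) := by
  classical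
  have hsub : T.biUnion (fun x => Finset.Ico (start x) (start x + width x)) ⊆ Finset.range N := by
    intro p hp
    obtain ⟨x, hx, hp⟩ := Finset.mem_biUnion.mp hp
    exact Finset.mem_range.mpr ((Finset.mem_Ico.mp hp).2.trans_le (hle x hx))
  rw [← Finset.sum_subset hsub fun p hp hp' => hzero p (Finset.mem_range.mp hp) fun x hx h =>
    hp' (Finset.mem_biUnion.mpr ⟨x, hx, h⟩), Finset.sum_biUnion hdisj]
  exact Finset.sum_congr rfl fun x _ => Finset.sum_Ico_eq_sum_range _ _ _ |>.trans (by simp)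

namespace TwoBlock

variable {n : ℕ} {m : Fin n → Fin 2 → ℕ}

theorem pathLen_eq_sum_range {α : Type*} (len : α → α → ℝ) (l : List α) (x₀ : α) :
    pathLen len l = ∑ p ∈ Finset.range (l.length - 1), len (l.getD p x₀) (l.getD (p + 1) x₀) := by
  induction l with
  | nil => simp [pathLen]
  | cons a l ih =>
    cases l with
    | nil => simp [pathLen]
    | cons b t =>
      rw [pathLen] at ih ⊢
      simp only [List.tail_cons, List.zip_cons_cons, List.map_cons, List.sum_cons] at ih ⊢
      rw [ih, show (a :: b :: t).length - 1 = (b :: t).length - 1 + 1 by simp,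
        Finset.sum_range_succ', add_comm]
      simp

theorem pathLen_reverse {α : Type*} (len : α → α → ℝ) (l : List α) :
    pathLen len l.reverse = pathLen (fun x y => len y x) l := by
  cases l with
  | nil => rfl
  | cons x₀ t =>
    rw [pathLen_eq_sum_range _ _ x₀, pathLen_eq_sum_range _ _ x₀, List.length_reverse,
      ← Finset.sum_range_reflect]
    refine Finset.sum_congr rfl fun p hp => ?_
    have hp := Finset.mem_range.mp hp
    rw [List.getD_reverse _ (by omega), List.getD_reverse _ (by omega)]
    congr 2 <;> omega

theorem pathLen_pos {α : Type*} {len : α → α → ℝ} {l : List α}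
    (hpos : ∀ p (hp : p + 1 < l.length), 0 < len l[p] l[p + 1]) (hl : 2 ≤ l.length) :
    0 < pathLen len l := by
  obtain ⟨x₀, -⟩ := List.exists_mem_of_length_pos (by omega : 0 < l.length)
  rw [pathLen_eq_sum_range _ _ x₀]
  refine Finset.sum_pos (fun p hp => ?_) ⟨0, by simp; omega⟩
  have hp := Finset.mem_range.mp hp
  rw [List.getD_eq_getElem _ _ (by omega), List.getD_eq_getElem _ _ (by omega)]
  exact hpos p (by omega)

@[simp] theorem isPickV_art (i : Fin n) (j : Fin 3) : isPickV (art i j : TBV n m) = false := rfl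

@[simp] theorem isPickV_pk (i : Fin n) (j : Fin 2) (k : Fin (m i j + 1)) :
    isPickV (pk i j k : TBV n m) = true := rfl

@[simp] theorem subPath_length (i : Fin n) (j : Fin 2) :
    (subPath (m := m) i j).length = m i j + 3 := by
  simp [subPath]

@[simp] theorem dirPath_length (i : Fin n) (j : Fin 2) (dir : Bool) :
    (dirPath (m := m) i j dir).length = m i j + 3 := by
  cases dir <;> simp [dirPath]

theorem subPath_getElem?_zero (i : Fin n) (j : Fin 2) :
    (subPath (m := m) i j)[0]? = some (art i j.castSucc) := rfl

theorem subPath_getElem?_succ (i : Fin n) (j : Fin 2) {t : ℕ} (ht : t < m i j + 1) :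
    (subPath (m := m) i j)[t + 1]? = some (pk i j ⟨t, ht⟩) := by
  rw [subPath, List.getElem?_cons_succ, List.getElem?_append_left (by simpa using ht),
    List.getElem?_ofFn, dif_pos ht]

theorem subPath_getElem?_last (i : Fin n) (j : Fin 2) :
    (subPath (m := m) i j)[m i j + 2]? = some (art i j.succ) := by
  simp [subPath]

theorem dirPath_false_getElem? (i : Fin n) (j : Fin 2) {t : ℕ} (ht : t < m i j + 3) :
    (dirPath (m := m) i j false)[t]? = (subPath (m := m) i j)[m i j + 2 - t]? := by
  rw [dirPath, if_neg Bool.false_ne_true, List.getElem?_reverse (by simpa using ht),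
    subPath_length]
  rfl

theorem dirPath_getElem?_zero (i : Fin n) (j : Fin 2) (dir : Bool) :
    (dirPath (m := m) i j dir)[0]? = some (art i (if dir then j.castSucc else j.succ)) := by
  cases dir
  · rw [dirPath_false_getElem? i j (by omega)]
    exact subPath_getElem?_last i j
  · exact subPath_getElem?_zero i j

theorem dirPath_getElem?_last (i : Fin n) (j : Fin 2) (dir : Bool) :
    (dirPath (m := m) i j dir)[m i j + 2]? =
      some (art i (if dir then j.succ else j.castSucc)) := by
  cases dir
  · rw [dirPath_false_getElem? i j (by omega), Nat.sub_self]
    exact subPath_getElem?_zero i j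
  · exact subPath_getElem?_last i j

theorem exists_dirPath_getElem?_eq_pk (i : Fin n) (j : Fin 2) (dir : Bool) {t : ℕ}
    (h0 : 0 < t) (h1 : t < m i j + 2) :
    ∃ k, (dirPath (m := m) i j dir)[t]? = some (pk i j k) := by
  cases dir
  · rw [dirPath_false_getElem? i j (by omega), show m i j + 2 - t = m i j + 1 - t + 1 by omega]
    exact ⟨_, subPath_getElem?_succ i j (by omega)⟩
  · obtain ⟨t, rfl⟩ := Nat.exists_eq_add_of_lt h0
    exact ⟨_, subPath_getElem?_succ i j (by omega)⟩

theorem isPickV_or_of_adjIn_subPath {i : Fin n} {j : Fin 2} {x y : TBV n m}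
    (h : adjIn (subPath i j) x y) : isPickV x = true ∨ isPickV y = true := by
  obtain ⟨t, hx, hy⟩ := h
  have ht : t + 1 < m i j + 3 := by
    simpa using (List.getElem?_eq_some_iff.mp hy).1
  rcases Nat.eq_zero_or_pos t with rfl | h0
  · obtain ⟨k, hk⟩ := exists_dirPath_getElem?_eq_pk (m := m) i j true (t := 1) one_pos (by omega)
    exact Or.inr (by rw [Option.some_injective _ (hy.symm.trans hk)]; rfl)
  · obtain ⟨k, hk⟩ := exists_dirPath_getElem?_eq_pk (m := m) i j true h0 (by omega)
    exact Or.inl (by rw [Option.some_injective _ (hx.symm.trans hk)]; rfl)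

theorem isPickV_dirPath_getD (i : Fin n) (j : Fin 2) (dir : Bool) (x₀ : TBV n m) {t : ℕ}
    (h0 : 0 < t) (h1 : t < m i j + 2) : isPickV ((dirPath i j dir).getD t x₀) = true := by
  obtain ⟨k, hk⟩ := exists_dirPath_getElem?_eq_pk i j dir h0 h1
  rw [List.getD_eq_getElem?_getD, hk]
  rfl

theorem vertLen_eq_pathLen (len : TBV n m → TBV n m → ℝ) (r : List (TBV n m)) :
    vertLen len r = pathLen (fun x y => if isPickV x || isPickV y then len x y else 0) r := rfl

theorem vertLen_dirPath (len : TBV n m → TBV n m → ℝ) (i : Fin n) (j : Fin 2) (dir : Bool) :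
    vertLen len (dirPath i j dir) = pathLen len (dirPath i j dir) := by
  rw [vertLen_eq_pathLen, pathLen_eq_sum_range _ _ (art i 0), pathLen_eq_sum_range _ _ (art i 0)]
  refine Finset.sum_congr rfl fun t ht => if_pos ?_
  have ht : t < m i j + 2 := by simpa using ht
  rcases Nat.eq_zero_or_pos t with rfl | h0
  · rw [zero_add, isPickV_dirPath_getD i j dir _ one_pos (by omega), Bool.or_true]
  · rw [isPickV_dirPath_getD i j dir _ h0 ht, Bool.true_or]

theorem pathLen_dirPath {len : TBV n m → TBV n m → ℝ} (hsymm : ∀ x y, len x y = len y x)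
    (i : Fin n) (j : Fin 2) (dir : Bool) :
    pathLen len (dirPath i j dir) = pathLen len (subPath i j) := by
  cases dir
  · simp only [dirPath, Bool.false_eq_true, if_false, pathLen_reverse, hsymm]
  · rfl

theorem pathLen_subPath_pos {len : TBV n m → TBV n m → ℝ} (hpos : ∀ x y, Adj x y → 0 < len x y)
    (i : Fin n) (j : Fin 2) : 0 < pathLen len (subPath i j) :=
  pathLen_pos (fun p hp => hpos _ _ (Or.inr ⟨i, j, Or.inl ⟨p, by simp, by simp⟩⟩)) (by simp)

def topIndicator : TBV n m → ZMod 2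
  | Sum.inl (_, j) => if j = 0 then 1 else 0
  | Sum.inr _ => 0

@[simp] theorem topIndicator_art (i : Fin n) (j : Fin 3) :
    topIndicator (art i j : TBV n m) = if j = 0 then 1 else 0 := rfl

theorem topIndicator_eq_of_adj {x y : TBV n m} (h : Adj x y) (hx : isPickV x = false)
    (hy : isPickV y = false) : topIndicator x = topIndicator y := by
  rcases h with ⟨i, i', j, -, ⟨rfl, rfl⟩ | ⟨rfl, rfl⟩⟩ | ⟨i, j, h | h⟩
  · simp
  · simp
  · rcases isPickV_or_of_adjIn_subPath h with h | h <;> simp_all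
  · rcases isPickV_or_of_adjIn_subPath h with h | h <;> simp_all

section Traversal

variable {r : List (TBV n m)} {q : ℕ} {i : Fin n} {j : Fin 2} {dir : Bool}

theorem TravAt.getElem? (h : TravAt r q i j dir) {t : ℕ} (ht : t < m i j + 3) :
    r[q + t]? = (dirPath i j dir)[t]? := by
  obtain ⟨s, hs⟩ := h
  rw [← List.getElem?_drop, ← hs, List.getElem?_append_left (by simpa using ht)]

theorem TravAt.getD (h : TravAt r q i j dir) (x₀ : TBV n m) {t : ℕ} (ht : t < m i j + 3) :
    r.getD (q + t) x₀ = (dirPath i j dir).getD t x₀ := by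
  rw [List.getD_eq_getElem?_getD, List.getD_eq_getElem?_getD, h.getElem? ht]

theorem TravAt.add_le_length (h : TravAt r q i j dir) : q + (m i j + 3) ≤ r.length := by
  have := h.length_le
  simp only [dirPath_length, List.length_drop] at this
  omega

theorem TravAt.sum_range_eq_pathLen {M : TBV n m → TBV n m → ℝ} (h : TravAt r q i j dir)
    (x₀ : TBV n m) :
    ∑ t ∈ Finset.range (m i j + 2), M (r.getD (q + t) x₀) (r.getD (q + t + 1) x₀) =
      pathLen M (dirPath i j dir) := by
  rw [pathLen_eq_sum_range _ _ x₀, dirPath_length, show m i j + 3 - 1 = m i j + 2 by omega]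
  refine Finset.sum_congr rfl fun t ht => ?_
  have ht := Finset.mem_range.mp ht
  rw [h.getD x₀ (by omega), add_assoc, h.getD x₀ (by omega)]

theorem TravAt.topIndicator_sub (h : TravAt r q i j dir) (x₀ : TBV n m) :
    topIndicator (r.getD (q + (m i j + 2)) x₀) - topIndicator (r.getD q x₀) =
      if j = 0 then 1 else 0 := by
  have h0 := h.getElem? (t := 0) (by omega)
  have hl := h.getElem? (t := m i j + 2) (by omega)
  rw [dirPath_getElem?_zero, add_zero] at h0
  rw [dirPath_getElem?_last] at hl
  rw [List.getD_eq_getElem?_getD, List.getD_eq_getElem?_getD, h0, hl]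
  cases dir <;> fin_cases j <;> simp

theorem TravAt.subaisle_unique {i' : Fin n} {j' : Fin 2} {dir' : Bool} (h : TravAt r q i j dir)
    (h' : TravAt r q i' j' dir') : i = i' ∧ j = j' := by
  obtain ⟨k, hk⟩ := exists_dirPath_getElem?_eq_pk (m := m) i j dir (t := 1) one_pos (by omega)
  obtain ⟨k', hk'⟩ := exists_dirPath_getElem?_eq_pk (m := m) i' j' dir' (t := 1) one_pos (by omega)
  have := (h.getElem? (t := 1) (by omega)).trans hk
  rw [h'.getElem? (by omega), hk'] at this
  simp only [pk, Option.some.injEq, Sum.inr.injEq] at this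
  obtain ⟨rfl, rfl, -⟩ := this
  exact ⟨rfl, rfl⟩

theorem TravAt.eq_of_le_of_lt {q' : ℕ} {i' : Fin n} {j' : Fin 2} {dir' : Bool}
    (h : TravAt r q i j dir) (h' : TravAt r q' i' j' dir') (hle : q ≤ q')
    (hlt : q' < q + (m i j + 2)) : q = q' := by
  by_contra hne
  obtain ⟨k, hk⟩ :=
    exists_dirPath_getElem?_eq_pk (m := m) i j dir (t := q' - q) (by omega) (by omega)
  have := (h.getElem? (t := q' - q) (by omega)).trans hk
  rw [Nat.add_sub_cancel' hle, ← add_zero q', h'.getElem? (t := 0) (by omega),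
    dirPath_getElem?_zero] at this
  simp [art, pk] at this

theorem NoReversal.exists_travAt (hnr : NoReversal r) {p : ℕ} {v : TBV n m}
    (hp : r[p]? = some v) (hv : isPickV v = true) :
    ∃ q i j dir, TravAt r q i j dir ∧ q < p ∧ p < q + (m i j + 2) := by
  obtain ⟨i, j, k, rfl⟩ : ∃ i j k, v = pk i j k := by
    rcases v with _ | ⟨i, j, k⟩
    · simp [isPickV] at hv
    · exact ⟨i, j, k, rfl⟩
  obtain ⟨q, dir, h, hqp, hpq⟩ := hnr p i j k hp
  refine ⟨q, i, j, dir, h, lt_of_le_of_ne hqp ?_, ?_⟩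
  · rintro rfl
    rw [← add_zero q, h.getElem? (by omega), dirPath_getElem?_zero] at hp
    simp [art, pk] at hp
  · by_contra hge
    rw [subPath_length] at hpq
    rw [show p = q + (m i j + 2) by omega, h.getElem? (by omega), dirPath_getElem?_last] at hp
    simp [art, pk] at hp

end Traversal

open Classical in
noncomputable def travSet (r : List (TBV n m)) : Finset (ℕ × Fin n × Fin 2) :=
  (Finset.range r.length ×ˢ Finset.univ).filter fun x => ∃ dir, TravAt r x.1 x.2.1 x.2.2 dir

section TravSet

variable {r : List (TBV n m)}

theorem mem_travSet {x : ℕ × Fin n × Fin 2} :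
    x ∈ travSet r ↔ ∃ dir, TravAt r x.1 x.2.1 x.2.2 dir := by
  simp only [travSet, Finset.mem_filter, Finset.mem_product, Finset.mem_range,
    Finset.mem_univ, and_true, and_iff_right_iff_imp]
  rintro ⟨dir, h⟩
  have := h.add_le_length
  omega

theorem pairwiseDisjoint_travSet :
    (travSet r : Set (ℕ × Fin n × Fin 2)).PairwiseDisjoint
      fun x => Finset.Ico x.1 (x.1 + (m x.2.1 x.2.2 + 2)) := by
  rintro ⟨q, i, j⟩ hx ⟨q', i', j'⟩ hx' hne
  obtain ⟨dir, h⟩ : ∃ dir, TravAt r q i j dir := mem_travSet.mp hx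
  obtain ⟨dir', h'⟩ : ∃ dir, TravAt r q' i' j' dir := mem_travSet.mp hx'
  refine Finset.disjoint_left.mpr fun p hp hp' => hne ?_
  dsimp only at hp hp'
  simp only [Finset.mem_Ico] at hp hp'
  obtain rfl : q = q' := by
    rcases le_total q q' with hle | hle
    · exact h.eq_of_le_of_lt h' hle (by omega)
    · exact (h'.eq_of_le_of_lt h hle (by omega)).symm
  obtain ⟨rfl, rfl⟩ := h.subaisle_unique h'
  rfl

theorem NoReversal.exists_mem_travSet (hnr : NoReversal r) (x₀ : TBV n m) {p : ℕ}
    (hp : p + 1 < r.length)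
    (hv : (isPickV (r.getD p x₀) || isPickV (r.getD (p + 1) x₀)) = true) :
    ∃ x ∈ travSet r, p ∈ Finset.Ico x.1 (x.1 + (m x.2.1 x.2.2 + 2)) := by
  have key : ∀ p', p' < r.length → isPickV (r.getD p' x₀) = true → p ≤ p' → p' ≤ p + 1 →
      ∃ x ∈ travSet r, p ∈ Finset.Ico x.1 (x.1 + (m x.2.1 x.2.2 + 2)) := by
    intro p' hp' hv hle hle'
    rw [List.getD_eq_getElem _ _ hp'] at hv
    obtain ⟨q, i, j, dir, h, hq, hq'⟩ :=
      hnr.exists_travAt (List.getElem?_eq_getElem hp') hv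
    exact ⟨(q, i, j), mem_travSet.mpr ⟨dir, h⟩, Finset.mem_Ico.mpr ⟨by dsimp only; omega,
      by dsimp only; omega⟩⟩
  rcases Bool.or_eq_true_iff.mp hv with hv | hv
  · exact key p (by omega) hv le_rfl (by omega)
  · exact key (p + 1) hp hv (by omega) le_rfl

theorem NoReversal.sum_range_eq_sum_travSet {M : Type*} [AddCommMonoid M] (hnr : NoReversal r)
    (x₀ : TBV n m) {f : ℕ → M}
    (hhoriz : ∀ p, p + 1 < r.length → isPickV (r.getD p x₀) = false →
      isPickV (r.getD (p + 1) x₀) = false → f p = 0) :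
    ∑ p ∈ Finset.range (r.length - 1), f p =
      ∑ x ∈ travSet r, ∑ t ∈ Finset.range (m x.2.1 x.2.2 + 2), f (x.1 + t) := by
  refine Finset.sum_range_eq_sum_sum_of_pairwiseDisjoint pairwiseDisjoint_travSet
    (fun x hx => ?_) fun p hp hout => hhoriz p (by omega) ?_ ?_
  · obtain ⟨dir, h⟩ := mem_travSet.mp hx
    have := h.add_le_length
    omega
  all_goals
    by_contra hv
    obtain ⟨x, hx, hpx⟩ := hnr.exists_mem_travSet x₀ (p := p) (by omega) (by simp_all)
    exact hout x hx hpx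

theorem vertLen_eq_card_travSet_mul {len : TBV n m → TBV n m → ℝ} {d : ℝ}
    (hsymm : ∀ x y, len x y = len y x) (hvert : ∀ i j, pathLen len (subPath i j) = d)
    (hnr : NoReversal r) : vertLen len r = (travSet r).card * d := by
  by_cases hr : r = []
  · simp [hr, vertLen, travSet]
  obtain ⟨x₀, -⟩ := r.exists_mem_of_ne_nil hr
  rw [vertLen_eq_pathLen, pathLen_eq_sum_range _ _ x₀,
    hnr.sum_range_eq_sum_travSet x₀ fun p _ hx hy => by rw [hx, hy]; rfl,
    Finset.card_eq_sum_ones, Nat.cast_sum, Finset.sum_mul]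
  refine Finset.sum_congr rfl fun x hx => ?_
  obtain ⟨dir, h⟩ := mem_travSet.mp hx
  refine (h.sum_range_eq_pathLen
    (M := fun a b => if isPickV a || isPickV b then len a b else 0) x₀).trans ?_
  rw [← vertLen_eq_pathLen, vertLen_dirPath, pathLen_dirPath hsymm, hvert, Nat.cast_one,
    one_mul]

theorem even_card_travSet_filter_top (hclosed : r.head? = r.getLast?) (hchain : r.IsChain Adj)
    (hnr : NoReversal r) : Even ((travSet r).filter fun x => x.2.2 = 0).card := by
  by_cases hr : r = []
  · simp [hr, travSet]
  obtain ⟨x₀, -⟩ := r.exists_mem_of_ne_nil hr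
  have hadj : ∀ p, p + 1 < r.length → Adj (r.getD p x₀) (r.getD (p + 1) x₀) := by
    intro p hp
    rw [List.getD_eq_getElem _ _ (by omega), List.getD_eq_getElem _ _ hp]
    exact List.isChain_iff_getElem.mp hchain p hp
  have htelescope : ∑ p ∈ Finset.range (r.length - 1),
      (topIndicator (r.getD (p + 1) x₀) - topIndicator (r.getD p x₀)) = 0 := by
    rw [Finset.sum_range_sub (fun p => topIndicator (r.getD p x₀)), List.getD_eq_getElem?_getD,
      List.getD_eq_getElem?_getD, ← List.getLast?_eq_getElem?, ← hclosed,
      List.head?_eq_getElem?, sub_self]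
  rw [hnr.sum_range_eq_sum_travSet x₀ fun p hp hx hy =>
    sub_eq_zero.mpr (topIndicator_eq_of_adj (hadj p hp) hx hy).symm] at htelescope
  rw [← ZMod.natCast_eq_zero_iff_even, ← Finset.sum_boole]
  refine (Finset.sum_congr rfl fun x hx => ?_).trans htelescope
  obtain ⟨dir, h⟩ := mem_travSet.mp hx
  exact (h.topIndicator_sub x₀).symm.trans
    (Finset.sum_range_sub (fun t => topIndicator (r.getD (x.1 + t) x₀)) _).symm

theorem card_le_card_travSet_filter {K : Finset (Fin n)} {j : Fin 2}
    (hK : ∀ a ∈ K, Traverses r a j) :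
    K.card ≤ ((travSet r).filter fun x => x.2.2 = j).card := by
  classical
  refine (Finset.card_le_card fun a ha => ?_).trans (Finset.card_image_le (f := fun x => x.2.1))
  obtain ⟨q, dir, h⟩ := hK a ha
  exact Finset.mem_image.mpr
    ⟨(q, a, j), Finset.mem_filter.mpr ⟨mem_travSet.mpr ⟨dir, h⟩, rfl⟩, rfl⟩

theorem card_add_card_lt_card_travSet {K1 K2 : Finset (Fin n)} (hodd : Odd K1.card)
    (htrav : TraversesAll K1 K2 r)
    (heven : Even ((travSet r).filter fun x => x.2.2 = 0).card) :
    K1.card + K2.card < (travSet r).card := by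
  have h1 := card_le_card_travSet_filter htrav.1
  have h2 := card_le_card_travSet_filter htrav.2
  have hne : K1.card ≠ ((travSet r).filter fun x => x.2.2 = 0).card :=
    fun h => Nat.not_even_iff_odd.mpr hodd (h ▸ heven)
  have hsplit : ((travSet r).filter fun x => x.2.2 = 0).card +
      ((travSet r).filter fun x => x.2.2 = 1).card = (travSet r).card := by
    rw [← Finset.card_filter_add_card_filter_not (s := travSet r) (fun x => x.2.2 = 0)]
    congr 2
    exact Finset.filter_congr fun x _ => by omega
  omega

end TravSet

theorem no_tight_vertical_distance_tour_general
    {n : ℕ} {m : Fin (n + 1) → Fin 2 → ℕ}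
    (len : TBV (n + 1) m → TBV (n + 1) m → ℝ) (d : ℝ)
    (hsymm : ∀ x y, len x y = len y x)
    (hpos : ∀ x y, Adj x y → 0 < len x y)
    (hvert : ∀ i j, pathLen len (subPath i j) = d)
    (K1 K2 : Finset (Fin (n + 1)))
    (hodd : Odd K1.card)
    (r : List (TBV (n + 1) m))
    (hr : IsTourFrom (art 0 0) r) (hnr : NoReversal r)
    (htrav : TraversesAll K1 K2 r) :
    vertLen len r ≠ ((K1.card + K2.card : ℕ) : ℝ) * d ∧
    (((K1.card + K2.card : ℕ) : ℝ) + 1) * d ≤ vertLen len r := by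
  obtain ⟨hhead, hlast, hchain⟩ := hr
  have hd : 0 < d := hvert 0 0 ▸ pathLen_subPath_pos hpos 0 0
  have hcard : K1.card + K2.card < (travSet r).card :=
    card_add_card_lt_card_travSet hodd htrav
      (even_card_travSet_filter_top (hhead.trans hlast.symm) hchain hnr)
  rw [vertLen_eq_card_travSet_mul hsymm hvert hnr]
  constructor
  · intro h
    have := mul_right_cancel₀ hd.ne' h
    norm_cast at this
    omega
  · gcongr
    exact_mod_cast hcard

/-- In a two-block warehouse graph (with symmetric positive edge lengths,
corresponding horizontal edges on the three cross-aisles of equal lengths, and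
every subaisle of the same vertical length `d`) under no-reversal routing,
assume the topmost-left subaisle `1` belongs to `K1`, that `|K1|` is odd and
`|K2|` is even (with `K2` nonempty).  Then no no-reversal tour traverses every
subaisle of `K1 ∪ K2` at least once with total vertical distance equal to
`|K1 ∪ K2| · d`; equivalently, every such tour has
`l_r ≥ (|K1 ∪ K2| + 1) · d`. -/
theorem no_tight_vertical_distance_tour
    {n : ℕ} {m : Fin (n + 1) → Fin 2 → ℕ}
    (len : TBV (n + 1) m → TBV (n + 1) m → ℝ) (d : ℝ)
    (hsymm : ∀ x y, len x y = len y x)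
    (hpos : ∀ x y, Adj x y → 0 < len x y)
    (hcross : ∀ (i i' : Fin (n + 1)), (i' : ℕ) = (i : ℕ) + 1 →
      ∀ j j' : Fin 3, len (art i j) (art i' j) = len (art i j') (art i' j'))
    (hvert : ∀ i j, pathLen len (subPath i j) = d)
    (K1 K2 : Finset (Fin (n + 1)))
    (h1 : (0 : Fin (n + 1)) ∈ K1) (hK2 : K2.Nonempty)
    (hodd : Odd K1.card) (heven : Even K2.card)
    (r : List (TBV (n + 1) m))
    (hr : IsTourFrom (art 0 0) r) (hnr : NoReversal r)
    (htrav : TraversesAll K1 K2 r) :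
    vertLen len r ≠ ((K1.card + K2.card : ℕ) : ℝ) * d ∧
    (((K1.card + K2.card : ℕ) : ℝ) + 1) * d ≤ vertLen len r :=
  no_tight_vertical_distance_tour_general len d hsymm hpos hvert K1 K2 hodd r hr hnr htrav

end TwoBlock
end
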